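/- arXiv:0801.4815 — 2 statements merged into one kernel-verified Lean document; each statement's English description precedes it below -/
import Mathlib

section
/- Let v = (v₀, v₁, v₂) with v₀, v₁, v₂ > 0, and let N_v = (0, −v₀+v₁, −v₀+v₂, v₀) ∈ ℝ⁴. Then with n₀=(1,0,0,1), n₁=(0,1,0,1), n₂=(0,0,1,1), n₃=(−1,0,0,1), n₄=(0,−1,0,1), n₅=(0,0,−1,1), the Euclidean inner products satisfy (n₀/v₀)·N_v = (n₁/v₁)·N_v = (n₂/v₂)·N_v = (n₃/v₀)·N_v = 1, and moreover (n₄/v₁)·N_v = 1 and (n₅/v₂)·N_v = 1 hold if and only if v₀ = v₁ and v₀ = v₂ respectively. Hence the six scaled points nᵢ/v_{c(i)} are coplanar (lie in {x : x·N_v = 1}) if and only if v₀ = v₁ = v₂. -/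
/-! Each scaled point `nᵢ / v_{c(i)}` lies on the hyperplane `x · N_v = 1` exactly when
`nᵢ · N_v = v_{c(i)}`. These dot products are `v₀, v₁, v₂, v₀` for `i ≤ 3`, and `2v₀ - v₁`,
`2v₀ - v₂` for `i = 4, 5`, so the last two conditions say `v₁ = v₀` and `v₂ = v₀`. -/

open Finset

/-- The Euclidean dot product on `ℝ⁴`. -/
def dot4 (x y : Fin 4 → ℝ) : ℝ := ∑ i : Fin 4, x i * y i

def n0 : Fin 4 → ℝ := ![1, 0, 0, 1]
def n1 : Fin 4 → ℝ := ![0, 1, 0, 1]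
def n2 : Fin 4 → ℝ := ![0, 0, 1, 1]
def n3 : Fin 4 → ℝ := ![-1, 0, 0, 1]
def n4 : Fin 4 → ℝ := ![0, -1, 0, 1]
def n5 : Fin 4 → ℝ := ![0, 0, -1, 1]

lemma dot4_smul_left (c : ℝ) (x y : Fin 4 → ℝ) : dot4 (c • x) y = c * dot4 x y := by
  simp only [dot4, Pi.smul_apply, smul_eq_mul, mul_sum, mul_assoc]

lemma dot4_inv_smul_eq_one_iff {c : ℝ} (hc : c ≠ 0) (x y : Fin 4 → ℝ) :
    dot4 (c⁻¹ • x) y = 1 ↔ dot4 x y = c := by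
  rw [dot4_smul_left, inv_mul_eq_one₀ hc, eq_comm]

lemma dot4_eq_coords (x y : Fin 4 → ℝ) :
    dot4 x y = x 0 * y 0 + x 1 * y 1 + x 2 * y 2 + x 3 * y 3 :=
  Fin.sum_univ_four _

def normalVec (v0 v1 v2 : ℝ) : Fin 4 → ℝ := ![0, -v0 + v1, -v0 + v2, v0]

section normalVec

variable (v0 v1 v2 : ℝ)

lemma dot4_n0_normalVec : dot4 n0 (normalVec v0 v1 v2) = v0 := by
  simp only [dot4_eq_coords, n0, normalVec, Matrix.cons_val]; ring

lemma dot4_n1_normalVec : dot4 n1 (normalVec v0 v1 v2) = v1 := by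
  simp only [dot4_eq_coords, n1, normalVec, Matrix.cons_val]; ring

lemma dot4_n2_normalVec : dot4 n2 (normalVec v0 v1 v2) = v2 := by
  simp only [dot4_eq_coords, n2, normalVec, Matrix.cons_val]; ring

lemma dot4_n3_normalVec : dot4 n3 (normalVec v0 v1 v2) = v0 := by
  simp only [dot4_eq_coords, n3, normalVec, Matrix.cons_val]; ring

lemma dot4_n4_normalVec : dot4 n4 (normalVec v0 v1 v2) = 2 * v0 - v1 := by
  simp only [dot4_eq_coords, n4, normalVec, Matrix.cons_val]; ring

lemma dot4_n5_normalVec : dot4 n5 (normalVec v0 v1 v2) = 2 * v0 - v2 := by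
  simp only [dot4_eq_coords, n5, normalVec, Matrix.cons_val]; ring

end normalVec

lemma two_mul_sub_eq_iff (a b : ℝ) : 2 * a - b = b ↔ a = b := by
  constructor <;> intro h <;> linarith

/-- With `N_v = (0, −v₀+v₁, −v₀+v₂, v₀)`, the scaled vertices `n₀/v₀, n₁/v₁, n₂/v₂,
n₃/v₀` satisfy `x · N_v = 1`; the conditions `(n₄/v₁) · N_v = 1` and
`(n₅/v₂) · N_v = 1` hold iff `v₀ = v₁` and `v₀ = v₂` respectively. Hence all six
scaled points are coplanar iff `v₀ = v₁ = v₂`. -/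
theorem stmt9 (v0 v1 v2 : ℝ) (h0 : 0 < v0) (h1 : 0 < v1) (h2 : 0 < v2) :
    let Nv : Fin 4 → ℝ := ![0, -v0 + v1, -v0 + v2, v0]
    dot4 (v0⁻¹ • n0) Nv = 1 ∧ dot4 (v1⁻¹ • n1) Nv = 1 ∧
    dot4 (v2⁻¹ • n2) Nv = 1 ∧ dot4 (v0⁻¹ • n3) Nv = 1 ∧
    (dot4 (v1⁻¹ • n4) Nv = 1 ↔ v0 = v1) ∧
    (dot4 (v2⁻¹ • n5) Nv = 1 ↔ v0 = v2) ∧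
    ((dot4 (v0⁻¹ • n0) Nv = 1 ∧ dot4 (v1⁻¹ • n1) Nv = 1 ∧ dot4 (v2⁻¹ • n2) Nv = 1 ∧
      dot4 (v0⁻¹ • n3) Nv = 1 ∧ dot4 (v1⁻¹ • n4) Nv = 1 ∧ dot4 (v2⁻¹ • n5) Nv = 1) ↔
      (v0 = v1 ∧ v0 = v2)) := by
  intro Nv
  have hNv : Nv = normalVec v0 v1 v2 := rfl
  rw [hNv]
  have e4 : dot4 (v1⁻¹ • n4) (normalVec v0 v1 v2) = 1 ↔ v0 = v1 := by
    rw [dot4_inv_smul_eq_one_iff h1.ne', dot4_n4_normalVec, two_mul_sub_eq_iff]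
  have e5 : dot4 (v2⁻¹ • n5) (normalVec v0 v1 v2) = 1 ↔ v0 = v2 := by
    rw [dot4_inv_smul_eq_one_iff h2.ne', dot4_n5_normalVec, two_mul_sub_eq_iff]
  simp only [e4, e5, dot4_inv_smul_eq_one_iff h0.ne', dot4_inv_smul_eq_one_iff h1.ne',
    dot4_inv_smul_eq_one_iff h2.ne', dot4_n0_normalVec, dot4_n1_normalVec, dot4_n2_normalVec,
    dot4_n3_normalVec, true_and]
end

section
/- Let w be a finite word in the letters {L, R} of length n. Consider the cusp triangulation strip built from w: an infinite periodic strip of Euclidean triangles in which each letter L contributes a triangle with a side on the bottom edge and apex on top, and each R contributes a triangle with a side on the top edge and apex on the bottom. Then the order of the vertex of the strip complex corresponding to a maximal block of k consecutive equal letters in the cyclic word w (with w not a power of a single letter) equals 2k + 4. -/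
open Finset

namespace StripComplex

/-- Signed count of `L`'s (letters `true`) among positions `0 ≤ j < i` (negated count
over `i ≤ j < 0` when `i < 0`): the horizontal coordinate of bottom-line vertices. -/
noncomputable def bot (w : ℤ → Bool) (i : ℤ) : ℤ :=
  (∑ j ∈ Finset.Ico (0 : ℤ) i, (if w j then 1 else 0)) -
    (∑ j ∈ Finset.Ico i (0 : ℤ), (if w j then 1 else 0))

/-- Signed count of `R`'s (letters `false`) among positions `0 ≤ j < i`:
the horizontal coordinate of top-line vertices. -/
noncomputable def top (w : ℤ → Bool) (i : ℤ) : ℤ :=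
  (∑ j ∈ Finset.Ico (0 : ℤ) i, (if w j then 0 else 1)) -
    (∑ j ∈ Finset.Ico i (0 : ℤ), (if w j then 0 else 1))

/-- The vertex set of the triangle of the planar triangulation associated to letter
position `i` in strip `s` (the strip between the horizontal lines `y = s` and
`y = s + 1`; strips of odd index are mirror images of the base strip).  A letter
`L = true` contributes a triangle with a side on the `L`-base line and apex on the
other line; vice versa for `R = false`. -/
def triVerts (w : ℤ → Bool) (s i : ℤ) : Set (ℤ × ℤ) :=
  let bL : ℤ := if Even s then s else s + 1
  let bR : ℤ := if Even s then s + 1 else s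
  if w i then {(bot w i, bL), (bot w i + 1, bL), (top w i, bR)}
  else {(top w i, bR), (top w i + 1, bR), (bot w i, bL)}

/-- The order (degree) of a vertex `v`: the number of triangles of the planar
triangulation incident to `v`. -/
noncomputable def vertexOrder (w : ℤ → Bool) (v : ℤ × ℤ) : ℕ :=
  Set.ncard {p : ℤ × ℤ | v ∈ triVerts w p.1 p.2}

/-! The bottom vertices of the triangle of letter `j` are `bot w j` and `bot w (j + 1)`, and
`bot w` is nondecreasing, increasing exactly at the letters `L`. Across a maximal block of `k`
letters `R` it is therefore constant, and it jumps at the two flanking letters `L`; so the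
vertex `(bot w i, 0)` lies on the triangles of the `k + 2` positions `i - 1, …, i + k`, each in
the strip `0` and in its mirror image, the strip `-1`. A block of letters `L` is reduced to this
case by exchanging the letters, which swaps `bot` and `top`, and reflecting in the line `y = 1/2`.
-/

lemma top_eq_bot_not (w : ℤ → Bool) : top w = bot (fun j => !w j) := by
  ext i
  unfold top bot
  congr 1 <;> exact sum_congr rfl fun j _ => by cases hw : w j <;> simp [hw]

lemma bot_not_eq_top (w : ℤ → Bool) : bot (fun j => !w j) = top w := by
  rw [top_eq_bot_not]

lemma top_not_eq_bot (w : ℤ → Bool) : top (fun j => !w j) = bot w := by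
  simp [top_eq_bot_not]

lemma bot_add_one (w : ℤ → Bool) (j : ℤ) :
    bot w (j + 1) = bot w j + if w j then 1 else 0 := by
  unfold bot
  rcases le_or_gt 0 j with hj | hj
  · rw [← sum_Ico_add_eq_sum_Ico_add_one hj, Ico_eq_empty_of_le hj,
      Ico_eq_empty_of_le (by omega : (0 : ℤ) ≤ j + 1)]
    ring
  · rw [← insert_Ico_add_one_left_eq_Ico hj, sum_insert (by simp), Ico_eq_empty_of_le hj.le,
      Ico_eq_empty_of_le (by omega : j + 1 ≤ 0)]
    ring

lemma bot_monotone (w : ℤ → Bool) : Monotone (bot w) :=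
  monotone_int_of_le_succ fun j => by rw [bot_add_one]; split <;> omega

lemma bot_add_one_of_true {w : ℤ → Bool} {j : ℤ} (h : w j = true) :
    bot w (j + 1) = bot w j + 1 := by
  simp [bot_add_one, h]

lemma bot_add_one_of_false {w : ℤ → Bool} {j : ℤ} (h : w j = false) :
    bot w (j + 1) = bot w j := by
  simp [bot_add_one, h]

lemma bot_eq_of_forall_false {w : ℤ → Bool} {a b : ℤ} (hab : a ≤ b)
    (h : ∀ j, a ≤ j → j < b → w j = false) : bot w b = bot w a := by
  induction b, hab using Int.leInduction with
  | base => rfl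
  | succ b hab ih =>
    rw [bot_add_one_of_false (h b hab (by omega)), ih fun j h1 h2 => h j h1 (by omega)]

lemma mem_triVerts_not_iff (w : ℤ → Bool) (s j x y : ℤ) :
    (x, 1 - y) ∈ triVerts (fun j => !w j) s j ↔ (x, y) ∈ triVerts w (-s) j := by
  simp only [triVerts, Int.even_iff, Int.neg_emod_two, bot_not_eq_top, top_not_eq_bot]
  split_ifs <;> grind

lemma vertexOrder_not (w : ℤ → Bool) (x y : ℤ) :
    vertexOrder (fun j => !w j) (x, 1 - y) = vertexOrder w (x, y) := by
  have : {p : ℤ × ℤ | (x, 1 - y) ∈ triVerts (fun j => !w j) p.1 p.2} =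
      Prod.map Neg.neg id ⁻¹' {p | (x, y) ∈ triVerts w p.1 p.2} := by
    ext p
    exact mem_triVerts_not_iff w p.1 p.2 x y
  rw [vertexOrder, vertexOrder, this, Set.ncard_preimage_of_injective_subset_range]
  · exact neg_injective.prodMap Function.injective_id
  · exact fun p _ => ⟨(-p.1, p.2), by simp⟩

lemma mem_triVerts_zero_iff (w : ℤ → Bool) (s j x : ℤ) :
    (x, 0) ∈ triVerts w s j ↔ (s = 0 ∨ s = -1) ∧ (x = bot w j ∨ x = bot w (j + 1)) := by
  simp only [triVerts, Int.even_iff]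
  split_ifs <;> grind [bot_add_one]

section Block

variable {w : ℤ → Bool} {i : ℤ} {k : ℕ}

lemma bot_eq_or_eq_bot_add_one_iff (hblock : ∀ j, i ≤ j → j < i + k → w j = false)
    (hl : w (i - 1) = true) (hr : w (i + k) = true) (j : ℤ) :
    bot w i = bot w j ∨ bot w i = bot w (j + 1) ↔ j ∈ Icc (i - 1) (i + k) := by
  have hconst : ∀ j ∈ Icc i (i + k), bot w j = bot w i := fun j hj =>
    bot_eq_of_forall_false (mem_Icc.1 hj).1 fun m h1 h2 =>
      hblock m h1 (h2.trans_le (mem_Icc.1 hj).2)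
  have hleft : bot w (i - 1) + 1 = bot w i := by
    simpa using (bot_add_one_of_true hl).symm
  have hright : bot w (i + k + 1) = bot w i + 1 := by
    rw [bot_add_one_of_true hr, hconst _ (by simp)]
  have hmono := bot_monotone w
  constructor
  · intro h
    by_contra hj
    rw [mem_Icc, not_and_or, not_le, not_le] at hj
    rcases hj with hj | hj
    · have h1 := hmono (show j ≤ i - 1 by omega)
      have h2 := hmono (show j + 1 ≤ i - 1 by omega)
      omega
    · have h1 := hmono (show i + k + 1 ≤ j by omega)
      have h2 := hmono (show i + k + 1 ≤ j + 1 by omega)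
      omega
  · intro hj
    by_cases hj' : j = i - 1
    · subst hj'
      simp
    · exact Or.inl (hconst j (by rw [mem_Icc] at hj ⊢; omega)).symm

lemma incidence_bot_of_block (hblock : ∀ j, i ≤ j → j < i + k → w j = false)
    (hl : w (i - 1) = true) (hr : w (i + k) = true) :
    {p : ℤ × ℤ | (bot w i, 0) ∈ triVerts w p.1 p.2} =
      ↑(({0, -1} : Finset ℤ) ×ˢ Icc (i - 1) (i + k)) := by
  ext ⟨s, j⟩
  simp only [Set.mem_ofPred_eq, mem_triVerts_zero_iff, bot_eq_or_eq_bot_add_one_iff hblock hl hr,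
    coe_product, Set.mem_prod, mem_coe, mem_insert, mem_singleton]

lemma vertexOrder_bot_of_block (hblock : ∀ j, i ≤ j → j < i + k → w j = false)
    (hl : w (i - 1) = true) (hr : w (i + k) = true) :
    vertexOrder w (bot w i, 0) = 2 * k + 4 := by
  rw [vertexOrder, incidence_bot_of_block hblock hl hr, Set.ncard_coe_finset, card_product,
    Int.card_Icc, show ({0, -1} : Finset ℤ).card = 2 by decide]
  omega

end Block

theorem stmt14_general (w : ℤ → Bool)
    (i : ℤ) (k : ℕ) (l : Bool)
    (hblock : ∀ j : ℤ, i ≤ j → j < i + k → w j = l)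
    (hmaxl : w (i - 1) ≠ l) (hmaxr : w (i + k) ≠ l) :
    vertexOrder w (if l then (top w i, 1) else (bot w i, 0)) = 2 * k + 4 := by
  cases l with
  | false => exact vertexOrder_bot_of_block hblock (by simpa using hmaxl) (by simpa using hmaxr)
  | true =>
    have hreflect := vertexOrder_not (fun j => !w j) (top w i) 0
    simp only [Bool.not_not, sub_zero] at hreflect
    rw [if_pos rfl, hreflect, top_eq_bot_not]
    exact vertexOrder_bot_of_block (by simpa using hblock) (by simpa using hmaxl)
      (by simpa using hmaxr)

/-- For a cyclic word `w` of period `n`, not a power of a single letter, the order of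
the vertex of the strip complex corresponding to a maximal block of `k` consecutive
equal letters equals `2k + 4`. -/
theorem stmt14 (n : ℕ) (hn : 0 < n) (w : ℤ → Bool)
    (hper : ∀ i : ℤ, w (i + n) = w i)
    (hnotconst : ∃ i j : ℤ, w i ≠ w j)
    (i : ℤ) (k : ℕ) (hk : 0 < k) (l : Bool)
    (hblock : ∀ j : ℤ, i ≤ j → j < i + k → w j = l)
    (hmaxl : w (i - 1) ≠ l) (hmaxr : w (i + k) ≠ l) :
    vertexOrder w (if l then (top w i, 1) else (bot w i, 0)) = 2 * k + 4 :=
  stmt14_general w i k l hblock hmaxl hmaxr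

end StripComplex
end
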